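/- Let h(t) = −t log₂ t − (1−t) log₂(1−t) for t ∈ [0,1] (with h(0) = h(1) = 0) and define h₀ : [0,1/4] → [0,1] by h₀(t) = h((1 − √(1−4t))/2). Then: h₀(t) = h(s) whenever s ∈ [0,1] and t = s(1−s); h₀(0) = 0; h₀ is nonnegative, monotone increasing, and concave on [0,1/4]; and 4t ≤ h₀(t) for all t ∈ [0,1/4]. -/

import Mathlib

open MeasureTheory Filter Topology
open scoped ENNReal

noncomputable section

/-- The lattice `ℤ^d`. -/
abbrev Zd (d : ℕ) := Fin d → ℤ

/-- The Hilbert space `ℓ²(ℤ^d)`. -/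
abbrev Hd (d : ℕ) := lp (fun _ : Zd d => ℂ) 2

variable {d : ℕ}

/-- The max (sup) norm `‖x‖ = max_i |x_i|` on `ℤ^d`, as a natural number. -/
def natNorm (x : Zd d) : ℕ := Finset.univ.sup fun i => (x i).natAbs

/-- Distance between two subsets of `ℤ^d` (`0` by convention if one of them is empty). -/
def setDist (C₁ C₂ : Set (Zd d)) : ℕ :=
  sInf {n | ∃ x ∈ C₁, ∃ y ∈ C₂, natNorm (x - y) = n}

/-- Boundary `∂C = {x ∈ C : dist({x}, Cᶜ) = 1}`. -/
def bdry (C : Set (Zd d)) : Set (Zd d) := {x ∈ C | setDist {x} Cᶜ = 1}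

/-- The standard basis vector `δ_x` of `ℓ²(ℤ^d)`. -/
def delta (x : Zd d) : Hd d := lp.single 2 x (1 : ℂ)

/-- Matrix element `A(x,y) = ⟨δ_x, A δ_y⟩`. -/
def matElem (A : Hd d →L[ℂ] Hd d) (x y : Zd d) : ℂ :=
  @inner ℂ _ _ (delta x) (A (delta y))

lemma indicator_norm_le (C : Set (Zd d)) (f : Hd d) (i : Zd d) :
    ‖C.indicator ⇑f i‖ ≤ ‖(f : ∀ _ : Zd d, ℂ) i‖ := by
  by_cases hi : i ∈ C
  · simp [Set.indicator_of_mem hi]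
  · simp [Set.indicator_of_notMem hi]

lemma memℓp_indicator (C : Set (Zd d)) (f : Hd d) : Memℓp (C.indicator ⇑f) 2 := by
  refine memℓp_gen ?_
  have hf : Summable fun i => ‖(f : ∀ _ : Zd d, ℂ) i‖ ^ (2 : ℝ≥0∞).toReal :=
    (memℓp_gen_iff (by norm_num)).mp (lp.memℓp f)
  refine hf.of_nonneg_of_le (fun i => by positivity) fun i =>
    Real.rpow_le_rpow (norm_nonneg _) (indicator_norm_le C f i) (by norm_num)

/-- The multiplication operator by the indicator of `C ⊆ ℤ^d` (orthogonal projection onto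
`ℓ²(C)`). -/
def chi (C : Set (Zd d)) : Hd d →L[ℂ] Hd d :=
  LinearMap.mkContinuous
    { toFun := fun f => (⟨C.indicator ⇑f, memℓp_indicator C f⟩ : Hd d)
      map_add' := by
        intro f g
        apply lp.ext
        funext x
        change C.indicator (⇑f + ⇑g) x = C.indicator ⇑f x + C.indicator ⇑g x
        by_cases hx : x ∈ C <;>
          simp [Set.indicator_of_mem, Set.indicator_of_notMem, hx, lp.coeFn_add]
      map_smul' := by
        intro c f
        apply lp.ext
        funext x
        by_cases hx : x ∈ C <;>
          simp [Set.indicator_of_mem, Set.indicator_of_notMem, hx, lp.coeFn_smul] }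
    1 (by
      intro f
      rw [one_mul]
      show ‖(⟨C.indicator ⇑f, memℓp_indicator C f⟩ : Hd d)‖ ≤ ‖f‖
      by_contra hcon
      push_neg at hcon
      have h2 : (0:ℝ) < (2 : ℝ≥0∞).toReal := by norm_num
      have hlt : ‖f‖ ^ (2 : ℝ≥0∞).toReal
          < ‖(⟨C.indicator ⇑f, memℓp_indicator C f⟩ : Hd d)‖ ^ (2 : ℝ≥0∞).toReal :=
        Real.rpow_lt_rpow (norm_nonneg _) hcon h2
      have hle : ‖(⟨C.indicator ⇑f, memℓp_indicator C f⟩ : Hd d)‖ ^ (2 : ℝ≥0∞).toReal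
          ≤ ‖f‖ ^ (2 : ℝ≥0∞).toReal := by
        rw [lp.norm_rpow_eq_tsum h2, lp.norm_rpow_eq_tsum h2 f]
        exact Summable.tsum_le_tsum
          (fun i => Real.rpow_le_rpow (norm_nonneg _) (indicator_norm_le C f i) h2.le)
          ((memℓp_gen_iff h2).mp (lp.memℓp _)) ((memℓp_gen_iff h2).mp (lp.memℓp f))
      exact absurd hle (not_le.mpr hlt))

/-- `Π_{C₁,C₂} = χ_{C₁} P χ_{C₂} P χ_{C₁}`. -/
def PiOp (P : Hd d →L[ℂ] Hd d) (C₁ C₂ : Set (Zd d)) : Hd d →L[ℂ] Hd d :=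
  chi C₁ ∘L P ∘L chi C₂ ∘L P ∘L chi C₁

/-- `Π_C = Π_{C,Cᶜ}`. -/
def PiC (P : Hd d →L[ℂ] Hd d) (C : Set (Zd d)) : Hd d →L[ℂ] Hd d := PiOp P C Cᶜ

/-- `A` is an orthogonal projection. -/
def IsOrthoProj (P : Hd d →L[ℂ] Hd d) : Prop := IsSelfAdjoint P ∧ P ∘L P = P

/-- Trace of (the restriction to `ℓ²(C)` of) `A` over a subset `C ⊆ ℤ^d`:
`Σ_{x∈C} Re A(x,x)`. -/
def trSet (C : Set (Zd d)) (A : Hd d →L[ℂ] Hd d) : ℝ :=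
  ∑' x : C, (matElem A x x).re

/-- `[0,∞]`-valued trace over a subset `C ⊆ ℤ^d`. -/
def trSetNN (C : Set (Zd d)) (A : Hd d →L[ℂ] Hd d) : ℝ≥0∞ :=
  ∑' x : C, ENNReal.ofReal (matElem A x x).re

/-- The cube `Λ_M = ([−M,M] ∩ ℤ)^d`. -/
def cube (d M : ℕ) : Set (Zd d) := {x | ∀ i, |x i| ≤ (M : ℤ)}

/-- Condition 1 on the test function `f`, with exponent `α`. -/
def Condition1 (f : ℝ → ℝ) (α : ℝ) : Prop :=
  (0 < α ∧ α ≤ 1) ∧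
  (∀ x : ℝ, x ∉ Set.Icc (0:ℝ) (1/4) → f x = 0) ∧
  ContDiffOn ℝ 2 f (Set.Ioc 0 (1/4)) ∧
  ∃ Cf : ℝ, ∀ k : ℕ, k ≤ 2 → ∀ x ∈ Set.Ioc (0:ℝ) (1/4),
    |iteratedDerivWithin k f (Set.Ioc 0 (1/4)) x| * x ^ ((k : ℝ) - α) ≤ Cf

/-- A measure preserving ergodic action of `ℤ^d` on a probability space. -/
structure ErgAction (d : ℕ) {Ω : Type*} [MeasurableSpace Ω] (μ : Measure Ω)
    (T : Zd d → Ω → Ω) : Prop where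
  measPres : ∀ a, MeasurePreserving (T a) μ μ
  base : T 0 = id
  add : ∀ a b, T (a + b) = T a ∘ T b
  ergodic : ∀ s : Set Ω, MeasurableSet s → (∀ a, T a ⁻¹' s = s) → μ s = 0 ∨ μ s = 1

/-- Assumption 1: `P(ω)` is an ergodic family of orthogonal projections with exponentially
decaying expected matrix elements. -/
structure Assumption1 (d : ℕ) {Ω : Type*} [MeasurableSpace Ω] (μ : Measure Ω)
    (T : Zd d → Ω → Ω) (P : Ω → Hd d →L[ℂ] Hd d) (C₀ γ : ℝ) : Prop where
  act : ErgAction d μ T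
  proj : ∀ᵐ ω ∂μ, IsOrthoProj (P ω)
  meas : ∀ x y, Measurable fun ω => matElem (P ω) x y
  covariant : ∀ a : Zd d, ∀ᵐ ω ∂μ, ∀ x y,
    matElem (P (T a ω)) x y = matElem (P ω) (x + a) (y + a)
  γpos : 0 < γ
  decay : ∀ x y, ∫ ω, ‖matElem (P ω) x y‖ ∂μ
    ≤ C₀ * Real.exp (-γ * natNorm (x - y))


/-- The half-space `ℤ^d_+ = ([0,∞) ∩ ℤ) × ℤ^{d-1}` (first coordinate nonnegative). -/
def Zplus (d : ℕ) : Set (Zd d) := {x | ∀ i : Fin d, (i : ℕ) = 0 → 0 ≤ x i}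

/-- The half-line `ℤ₋ = (−∞,0] ∩ ℤ`, inside `ℤ¹`. -/
def Zminus1 : Set (Zd 1) := {x | x 0 ≤ 0}

/-- The lattice point `j·e₁ ∈ ℤ^d`. -/
def axisPt (d : ℕ) (j : ℕ) : Zd d := fun i => if (i : ℕ) = 0 then (j : ℤ) else 0

/-- The face `F_M^{(i,s)}` of the cube `Λ_M` (`s = true` for the `+` face). -/
def face (d M : ℕ) (i : Fin d) (s : Bool) : Set (Zd d) :=
  {x ∈ cube d M | x i = if s then (M : ℤ) else -(M : ℤ)}

/-- The truncated face `F̂_M^{(i,s)}` (points at distance `≥ 3ℓ` from all other faces). -/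
def faceHat (d M ℓ : ℕ) (i : Fin d) (s : Bool) : Set (Zd d) :=
  {x ∈ face d M i s | ∀ j t, (j, t) ≠ (i, s) → 3 * ℓ ≤ setDist {x} (face d M j t)}

/-- The surface layer `B_M^{(i,s)}`, the `ℓ`-neighborhood of `F̂_M^{(i,s)}` inside `Λ_M`. -/
def layer (d M ℓ : ℕ) (i : Fin d) (s : Bool) : Set (Zd d) :=
  {x ∈ cube d M | setDist {x} (faceHat d M ℓ i s) < ℓ}

/-- The lattice half-space `ℤ^d_{+,(i,s)}` containing `Λ_M` with `F_M^{(i,s)}` on its boundary. -/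
def halfSp (d M : ℕ) (i : Fin d) (s : Bool) : Set (Zd d) :=
  {x | if s then x i ≤ (M : ℤ) else -(M : ℤ) ≤ x i}

/-- The error term `R_d(M) = (M^d e^{−αγℓ/2} + (d−1) ℓ² M^{d−2})²`. -/
def RdErr (d M ℓ : ℕ) (α γ : ℝ) : ℝ :=
  ((M : ℝ) ^ d * Real.exp (-(α * γ * ℓ) / 2)
    + ((d : ℝ) - 1) * (ℓ : ℝ) ^ 2 * (M : ℝ) ^ (d - 2)) ^ 2


/-! With `r = √(1 - 4t)`, the argument `(1 - r) / 2` of `h` in `h₀(t)` is the smaller root of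
`s (1 - s) = t`, so the first identity is the symmetry `h(s) = h(1 - s)`, and `h₀` is increasing
because this root and `h` on `[0, 1/2]` are. Differentiating,
`h₀'(t) = (log (1 + r) - log (1 - r)) / (r log 2) = (2 / log 2) ∑ₖ r^(2k) / (2k + 1)`, which grows
with `r` and therefore decreases in `t`: `h₀` is concave. The chord from `h₀(0) = 0` to
`h₀(1/4) = 1` then gives `4t ≤ h₀(t)`. -/

section
open Real Set

def lowerRoot (t : ℝ) : ℝ := (1 - √(1 - 4 * t)) / 2

lemma lowerRoot_mul_one_sub (s : ℝ) : lowerRoot (s * (1 - s)) = min s (1 - s) := by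
  rw [lowerRoot, show 1 - 4 * (s * (1 - s)) = (1 - 2 * s) ^ 2 by ring, sqrt_sq_eq_abs]
  rcases le_total s (1 - s) with hs | hs
  · rw [min_eq_left hs, abs_of_nonneg (by linarith)]; ring
  · rw [min_eq_right hs, abs_of_nonpos (by linarith)]; ring

lemma binEntropy_lowerRoot_mul_one_sub (s : ℝ) :
    binEntropy (lowerRoot (s * (1 - s))) = binEntropy s := by
  rw [lowerRoot_mul_one_sub]
  rcases le_total s (1 - s) with hs | hs
  · rw [min_eq_left hs]
  · rw [min_eq_right hs, binEntropy_one_sub]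

lemma lowerRoot_zero : lowerRoot 0 = 0 := by norm_num [lowerRoot]

lemma lowerRoot_quarter : lowerRoot (1 / 4) = 2⁻¹ := by norm_num [lowerRoot]

lemma continuous_lowerRoot : Continuous lowerRoot := by
  unfold lowerRoot; fun_prop

lemma monotone_lowerRoot : Monotone lowerRoot := fun a b hab => by
  unfold lowerRoot
  gcongr

lemma mapsTo_lowerRoot : MapsTo lowerRoot (Icc 0 (1 / 4)) (Icc 0 2⁻¹) := fun _ ht =>
  ⟨lowerRoot_zero ▸ monotone_lowerRoot ht.1, lowerRoot_quarter ▸ monotone_lowerRoot ht.2⟩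

lemma sqrt_one_sub_four_mul_mem_Ioo {t : ℝ} (ht : t ∈ Ioo 0 (1 / 4)) :
    √(1 - 4 * t) ∈ Ioo 0 1 :=
  ⟨sqrt_pos.2 (by linarith [ht.2]), (sqrt_lt' one_pos).2 (by linarith [ht.1])⟩

lemma hasDerivAt_lowerRoot {t : ℝ} (ht : t < 1 / 4) :
    HasDerivAt lowerRoot (√(1 - 4 * t))⁻¹ t := by
  have hpos : 0 < √(1 - 4 * t) := sqrt_pos.2 (by linarith)
  have h : HasDerivAt (fun x => (1 - √(1 - 4 * x)) / 2) (-(-4 / (2 * √(1 - 4 * t))) / 2) t := by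
    simpa using ((((hasDerivAt_id t).const_mul 4).const_sub 1).sqrt
      (by simp; linarith)).const_sub 1 |>.div_const 2
  refine h.congr_deriv ?_
  field_simp
  ring

lemma monotoneOn_log_sub_log_div_self :
    MonotoneOn (fun r => (log (1 + r) - log (1 - r)) / r) (Ioo 0 1) := by
  have series {r : ℝ} (hr : r ∈ Ioo 0 1) : HasSum (fun k : ℕ => 2 * (1 / (2 * k + 1)) * r ^ (2 * k))
      ((log (1 + r) - log (1 - r)) / r) := by
    have h := (hasSum_log_sub_log_of_abs_lt_one (abs_lt.2 ⟨by linarith [hr.1], hr.2⟩)).div_const r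
    simp only [pow_succ, ← mul_assoc, mul_div_cancel_right₀ _ hr.1.ne'] at h
    exact h
  intro a ha b hb hab
  exact hasSum_le (fun k => by gcongr; exact ha.1.le) (series ha) (series hb)

lemma hasDerivAt_binEntropy_lowerRoot {t : ℝ} (ht : t ∈ Ioo 0 (1 / 4)) :
    HasDerivAt (binEntropy ∘ lowerRoot)
      ((log (1 + √(1 - 4 * t)) - log (1 - √(1 - 4 * t))) / √(1 - 4 * t)) t := by
  obtain ⟨hr0, hr1⟩ := sqrt_one_sub_four_mul_mem_Ioo ht
  set r := √(1 - 4 * t)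
  have hroot : lowerRoot t = (1 - r) / 2 := rfl
  have h := (hasDerivAt_binEntropy (p := lowerRoot t) (by rw [hroot]; linarith)
    (by rw [hroot]; linarith)).comp t (hasDerivAt_lowerRoot ht.2)
  refine h.congr_deriv ?_
  rw [hroot, show 1 - (1 - r) / 2 = (1 + r) / 2 by ring, log_div (by linarith) two_ne_zero,
    log_div (by linarith) two_ne_zero]
  ring

lemma concaveOn_binEntropy_lowerRoot : ConcaveOn ℝ (Icc 0 (1 / 4)) (binEntropy ∘ lowerRoot) := by
  refine AntitoneOn.concaveOn_of_deriv (convex_Icc _ _)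
    (binEntropy_continuous.comp continuous_lowerRoot).continuousOn
    (fun t ht => ?_) (fun a ha b hb hab => ?_) <;> rw [interior_Icc] at *
  · exact (hasDerivAt_binEntropy_lowerRoot ht).differentiableAt.differentiableWithinAt
  · rw [(hasDerivAt_binEntropy_lowerRoot ha).deriv, (hasDerivAt_binEntropy_lowerRoot hb).deriv]
    exact monotoneOn_log_sub_log_div_self (sqrt_one_sub_four_mul_mem_Ioo hb)
      (sqrt_one_sub_four_mul_mem_Ioo ha) (sqrt_le_sqrt (by linarith))

lemma monotoneOn_binEntropy_lowerRoot : MonotoneOn (binEntropy ∘ lowerRoot) (Icc 0 (1 / 4)) :=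
  binEntropy_strictMonoOn.monotoneOn.comp (monotone_lowerRoot.monotoneOn _) mapsTo_lowerRoot

lemma four_mul_log_two_le_binEntropy_lowerRoot {t : ℝ} (ht : t ∈ Icc 0 (1 / 4)) :
    4 * t * log 2 ≤ binEntropy (lowerRoot t) := by
  have h := concaveOn_binEntropy_lowerRoot.2 (left_mem_Icc.2 (by norm_num : (0 : ℝ) ≤ 1 / 4))
    (right_mem_Icc.2 (by norm_num : (0 : ℝ) ≤ 1 / 4))
    (by linarith [ht.2] : 0 ≤ 1 - 4 * t) (by linarith [ht.1] : 0 ≤ 4 * t) (by ring)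
  simp only [smul_eq_mul, Function.comp_apply, lowerRoot_zero, lowerRoot_quarter,
    binEntropy_zero, binEntropy_two_inv] at h
  rwa [show (1 - 4 * t) * 0 + 4 * t * (1 / 4) = t by ring, mul_zero, zero_add] at h

end

/-- Elementary properties of the binary Shannon entropy `h` and of
`h₀(t) = h((1−√(1−4t))/2)` on `[0,1/4]`. -/
theorem statement5 :
    ∀ h h0 : ℝ → ℝ,
      (∀ t, h t = -t * Real.logb 2 t - (1 - t) * Real.logb 2 (1 - t)) →
      (∀ t, h0 t = h ((1 - Real.sqrt (1 - 4 * t)) / 2)) →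
      (∀ s : ℝ, s ∈ Set.Icc (0:ℝ) 1 → h0 (s * (1 - s)) = h s) ∧
      h0 0 = 0 ∧
      (∀ t ∈ Set.Icc (0:ℝ) (1/4), 0 ≤ h0 t) ∧
      MonotoneOn h0 (Set.Icc 0 (1/4)) ∧
      ConcaveOn ℝ (Set.Icc 0 (1/4)) h0 ∧
      (∀ t ∈ Set.Icc (0:ℝ) (1/4), 4 * t ≤ h0 t) := by
  intro h h0 hh hh0
  have hlog2 : 0 < Real.log 2 := Real.log_pos one_lt_two
  have eh : h = fun t => (Real.log 2)⁻¹ * Real.binEntropy t := by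
    funext t
    rw [hh]
    simp only [Real.logb, Real.binEntropy, Real.log_inv]
    ring
  have eh0 : h0 = fun t => (Real.log 2)⁻¹ * Real.binEntropy (lowerRoot t) := by
    funext t
    rw [hh0, eh, lowerRoot]
  subst eh0 eh
  have hlower (t : ℝ) (ht : t ∈ Set.Icc (0 : ℝ) (1 / 4)) :
      4 * t ≤ (Real.log 2)⁻¹ * Real.binEntropy (lowerRoot t) := by
    rw [le_inv_mul_iff₀ hlog2, mul_comm]
    exact four_mul_log_two_le_binEntropy_lowerRoot ht
  refine ⟨fun s _ => by simp only [binEntropy_lowerRoot_mul_one_sub], by simp [lowerRoot_zero],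
    fun t ht => by linarith [hlower t ht, ht.1], fun a ha b hb hab => ?_,
    concaveOn_binEntropy_lowerRoot.smul (inv_nonneg.2 hlog2.le), hlower⟩
  exact mul_le_mul_of_nonneg_left (monotoneOn_binEntropy_lowerRoot ha hb hab)
    (inv_nonneg.2 hlog2.le)

end
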